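/- Let q be a quasilinear quadratic form over a field F of characteristic 2 and let L be a field extension of F. Then there exists a subform r of the anisotropic part q_an such that r_L ≅ (q_L)_an. -/

import Mathlib

open scoped BigOperators

namespace QLin

variable (K : Type) [Field K]

/-- Value of the diagonal (quasilinear) quadratic form with coefficients `d` at the vector `v`. -/
def qf {n : ℕ} (d : Fin n → K) (v : Fin n → K) : K := ∑ i, d i * v i ^ 2

/-- The set `D(q)` of values represented by the diagonal form `d`. -/
def Dset {n : ℕ} (d : Fin n → K) : Set K := Set.range (qf K d)

/-- A diagonal quadratic form is anisotropic if it has no nontrivial zero. -/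
def Anis {n : ℕ} (d : Fin n → K) : Prop := ∀ v : Fin n → K, qf K d v = 0 → v = 0

/-- The isotropy index `i₀`: the maximal dimension of a totally isotropic subspace. -/
noncomputable def i0 {n : ℕ} (d : Fin n → K) : ℕ :=
  sSup {m | ∃ W : Submodule K (Fin n → K), (∀ v ∈ W, qf K d v = 0) ∧ Module.finrank K W = m}

/-- Isometry of two diagonal quadratic forms (possibly of different ambient dimensions;
an isometry forces the dimensions to agree). -/
def Isom {n m : ℕ} (d : Fin n → K) (e : Fin m → K) : Prop :=
  ∃ φ : (Fin n → K) ≃ₗ[K] (Fin m → K), ∀ v, qf K e (φ v) = qf K d v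

/-- `r` is a subform of `q` : `q ≅ r ⊥ s` for some form `s`. -/
def Subform {n m : ℕ} (r : Fin n → K) (q : Fin m → K) : Prop :=
  ∃ (k : ℕ) (s : Fin k → K), Isom K q (Fin.append r s)

/-- `d` is similar to `e` : `e ≅ a • d` for some `a ≠ 0`. -/
def Similar {n m : ℕ} (d : Fin n → K) (e : Fin m → K) : Prop :=
  ∃ a : K, a ≠ 0 ∧ Isom K (fun i => a * d i) e

/-- `d` is similar to a subform of `q`. -/
def SimSubform {n m : ℕ} (d : Fin n → K) (q : Fin m → K) : Prop :=
  ∃ a : K, a ≠ 0 ∧ Subform K (fun i => a * d i) q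

/-- Tensor product of diagonal quadratic forms. -/
def tens {n m : ℕ} (d : Fin n → K) (e : Fin m → K) : Fin (n * m) → K :=
  fun k => d (finProdFinEquiv.symm k).1 * e (finProdFinEquiv.symm k).2

/-- `q` is divisible by `π` : `q ≅ π ⊗ r` for some form `r`. -/
def Divisible {n m : ℕ} (π : Fin n → K) (q : Fin m → K) : Prop :=
  ∃ (k : ℕ) (r : Fin k → K), Isom K q (tens K π r)

/-- The diagonal coefficients of the `s`-fold quasi-Pfister form `⟨⟨a₁,…,a_s⟩⟩ =
`⟨1,a₁⟩ ⊗ ⋯ ⊗ ⟨1,a_s⟩`: the products of the `a i` over all subsets of the index set. -/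
def qPfister {s : ℕ} (a : Fin s → K) : Fin (2 ^ s) → K :=
  fun j => ∏ i : Fin s, if Nat.testBit (j : ℕ) (i : ℕ) then a i else 1

/-- `r` is (a representative of) the anisotropic part of `q`:
`r` is anisotropic and `q ≅ i₀(q)·⟨0⟩ ⊥ r`. -/
def IsAnisPart {n m : ℕ} (r : Fin n → K) (q : Fin m → K) : Prop :=
  Anis K r ∧ ∃ k : ℕ, Isom K q (Fin.append (fun _ : Fin k => (0 : K)) r)

/-- The divisibility index `𝔡₀(q)`: the largest `s` such that the anisotropic part of `q`
is divisible by an `s`-fold quasi-Pfister form. -/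
noncomputable def d0 {n : ℕ} (q : Fin n → K) : ℕ :=
  sSup {s | ∃ a : Fin s → K, (∀ i, a i ≠ 0) ∧
    ∃ (k : ℕ) (r : Fin k → K), IsAnisPart K r q ∧ Divisible K (qPfister K a) r}

/-- The norm field `N(q)`: the smallest subfield of `K` containing all squares and all
ratios of nonzero represented values of `q`. -/
def normField {n : ℕ} (d : Fin n → K) : Subfield K :=
  Subfield.closure ((Set.range fun x : K => x ^ 2) ∪
    {z | ∃ a ∈ Dset K d, ∃ b ∈ Dset K d, b ≠ 0 ∧ z = a / b})

/-- `lndeg(q)`: the base-2 logarithm of the dimension of the norm form of `q`, i.e. the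
(unique, when `q` is nonzero) `s` such that some anisotropic `s`-fold quasi-Pfister form
represents exactly the elements of the norm field of `q`. -/
noncomputable def lndeg {n : ℕ} (d : Fin n → K) : ℕ :=
  sInf {s | ∃ a : Fin s → K, (∀ i, a i ≠ 0) ∧ Anis K (qPfister K a) ∧
    Dset K (qPfister K a) = (normField K d : Set K)}

/-- Base change of a diagonal quadratic form along a field extension `F → K`. -/
def bc (F : Type) [Field F] (K : Type) [Field K] [Algebra F K] {n : ℕ} (d : Fin n → F) :
    Fin n → K := fun i => algebraMap F K (d i)

/-- The defining polynomial of the standard affine chart of the projective quadric `{p = 0}`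
attached to a diagonal form `p` of dimension `n + 2` (dehomogenized at the last variable). -/
noncomputable def chartD (F : Type) [Field F] {n : ℕ} (d : Fin (n + 2) → F) :
    MvPolynomial (Fin (n + 1)) F :=
  (∑ i : Fin (n + 1), MvPolynomial.C (d i.castSucc) * MvPolynomial.X i ^ 2) +
    MvPolynomial.C (d (Fin.last (n + 1)))

/-- `K` is (realizes) the function field `F(p)` of the projective quadric `{p = 0}`:
`K` is generated over `F` by a point `x` of the affine chart of the quadric whose
ideal of relations is exactly the one generated by the defining equation. -/
def IsFunFld (F : Type) [Field F] {n : ℕ} (p : Fin (n + 2) → F) (K : Type) [Field K]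
    [Algebra F K] : Prop :=
  ∃ x : Fin (n + 1) → K,
    RingHom.ker (MvPolynomial.aeval x : MvPolynomial (Fin (n + 1)) F →ₐ[F] K) =
      Ideal.span {chartD F p} ∧
    ∀ z : K, ∃ a b : MvPolynomial (Fin (n + 1)) F,
      MvPolynomial.aeval x b ≠ 0 ∧ z * MvPolynomial.aeval x b = MvPolynomial.aeval x a

/-- The full diagonal polynomial of a diagonal form (the equation of the affine cone). -/
noncomputable def diagPoly (F : Type) [Field F] {n : ℕ} (d : Fin n → F) :
    MvPolynomial (Fin n) F :=
  ∑ i : Fin n, MvPolynomial.C (d i) * MvPolynomial.X i ^ 2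

/-- `M` is (realizes) the affine cone function field `F[p]`, i.e. the fraction field of
`F[T₁,…,Tₙ]/(p(T))`. -/
def IsAffFunFld (F : Type) [Field F] {n : ℕ} (p : Fin n → F) (M : Type) [Field M]
    [Algebra F M] : Prop :=
  ∃ x : Fin n → M,
    RingHom.ker (MvPolynomial.aeval x : MvPolynomial (Fin n) F →ₐ[F] M) =
      Ideal.span {diagPoly F p} ∧
    ∀ z : M, ∃ a b : MvPolynomial (Fin n) F,
      MvPolynomial.aeval x b ≠ 0 ∧ z * MvPolynomial.aeval x b = MvPolynomial.aeval x a

/-- `L` is a purely transcendental field extension of `F`. -/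
def IsPurelyTransc (F L : Type) [Field F] [Field L] [Algebra F L] : Prop :=
  ∃ s : Set L, AlgebraicIndependent F (Subtype.val : s → L) ∧
    IntermediateField.adjoin F s = ⊤

end QLin

/-! Over a field of characteristic 2 the form `⟨a₁,…,aₘ⟩` is additive, so an isotropic vector
`v` with `vᵢ ≠ 0` can replace the basis vector `eᵢ`; this shows `⟨a₁,…,aₘ⟩ ≅ ⟨0⟩ ⊥ ⟨aⱼ⟩_{j ≠ i}`.
Iterating, `(q_an)_L` is isometric to `u·⟨0⟩ ⊥ r_L` where `r` is obtained from the diagonal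
`q_an` by deleting some of its entries, and `r_L` is anisotropic. Such an `r` is a subform of
`q_an`, and `q_L ≅ i₀(q)·⟨0⟩ ⊥ (q_an)_L` then exhibits `r_L` as the anisotropic part of `q_L`. -/

namespace QLin

variable {K : Type} [Field K]

theorem qf_append {a b : ℕ} (d : Fin a → K) (e : Fin b → K) (w : Fin (a + b) → K) :
    qf K (Fin.append d e) w
      = qf K d (fun i => w (Fin.castAdd b i)) + qf K e (fun j => w (Fin.natAdd a j)) := by
  simp [qf, Fin.sum_univ_add]

theorem qf_smul {n : ℕ} (d : Fin n → K) (c : K) (v : Fin n → K) :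
    qf K d (c • v) = c ^ 2 * qf K d v := by
  simp only [qf, Pi.smul_apply, smul_eq_mul, Finset.mul_sum]
  exact Finset.sum_congr rfl fun i _ => by ring

theorem qf_update_zero {n : ℕ} (d w : Fin n → K) (i : Fin n) :
    qf K d (Function.update w i 0) = qf K (Function.update d i 0) w := by
  refine Finset.sum_congr rfl fun j _ => ?_
  by_cases hj : j = i
  · simp [hj]
  · simp [Function.update_of_ne hj]

theorem Isom.refl {a : ℕ} (d : Fin a → K) : Isom K d d :=
  ⟨LinearEquiv.refl K _, fun _ => rfl⟩

theorem Isom.symm {a b : ℕ} {d : Fin a → K} {e : Fin b → K} (h : Isom K d e) : Isom K e d := by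
  obtain ⟨φ, hφ⟩ := h
  exact ⟨φ.symm, fun w => by rw [← hφ, φ.apply_symm_apply]⟩

theorem Isom.trans {a b c : ℕ} {d : Fin a → K} {e : Fin b → K} {f : Fin c → K}
    (h₁ : Isom K d e) (h₂ : Isom K e f) : Isom K d f := by
  obtain ⟨φ, hφ⟩ := h₁
  obtain ⟨ψ, hψ⟩ := h₂
  exact ⟨φ.trans ψ, fun v => by rw [LinearEquiv.trans_apply, hψ, hφ]⟩

theorem isom_comp_equiv {a b : ℕ} (σ : Fin a ≃ Fin b) (d : Fin b → K) : Isom K (d ∘ σ) d := by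
  refine ⟨LinearEquiv.funCongrLeft K K σ.symm, fun v => ?_⟩
  simp only [qf, LinearEquiv.funCongrLeft_apply, LinearMap.funLeft_apply, Function.comp_apply]
  exact (Equiv.sum_comp σ fun i => d i * v (σ.symm i) ^ 2).symm.trans (by simp)

variable (K) in
def splitLinearEquiv (a b : ℕ) : (Fin (a + b) → K) ≃ₗ[K] (Fin a → K) × (Fin b → K) :=
  { (Fin.appendEquiv a b).symm with
    map_add' := fun _ _ => rfl
    map_smul' := fun _ _ => rfl }

theorem Isom.append {a b c e : ℕ} {x : Fin a → K} {x' : Fin b → K} {y : Fin c → K}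
    {y' : Fin e → K} (hx : Isom K x x') (hy : Isom K y y') :
    Isom K (Fin.append x y) (Fin.append x' y') := by
  obtain ⟨φ, hφ⟩ := hx
  obtain ⟨ψ, hψ⟩ := hy
  refine ⟨(splitLinearEquiv K a c).trans ((φ.prodCongr ψ).trans (splitLinearEquiv K b e).symm),
    fun v => ?_⟩
  simp only [LinearEquiv.trans_apply, qf_append]
  simp [splitLinearEquiv, hφ, hψ]

theorem isom_zero_append_zero_append {a b c : ℕ} (x : Fin c → K) :
    Isom K (Fin.append (fun _ : Fin a => (0 : K)) (Fin.append (fun _ : Fin b => (0 : K)) x))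
      (Fin.append (fun _ : Fin (a + b) => (0 : K)) x) := by
  have hzero : Fin.append (fun _ : Fin a => (0 : K)) (fun _ : Fin b => 0) = fun _ => 0 :=
    funext fun i => Fin.addCases (fun _ => by simp) (fun _ => by simp) i
  rw [← hzero, Fin.append_assoc]
  exact (isom_comp_equiv (finCongr (Nat.add_assoc a b c)) _).symm

theorem subform_comp_of_injective {t m : ℕ} (d : Fin m → K) {ι : Fin t → Fin m}
    (hι : Function.Injective ι) : Subform K (d ∘ ι) d := by
  classical
  let p : Fin m → Prop := (· ∈ Set.range ι)
  let e : {x // ¬ p x} ≃ Fin (Fintype.card {x // ¬ p x}) := Fintype.equivFin _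
  let τ : Fin (t + Fintype.card {x // ¬ p x}) ≃ Fin m :=
    finSumFinEquiv.symm.trans (((Equiv.ofInjective ι hι).sumCongr e.symm).trans
      (Equiv.sumCompl p))
  refine ⟨_, fun j => d (e.symm j), ?_⟩
  have hτ : Fin.append (d ∘ ι) (fun j => d (e.symm j)) = d ∘ τ :=
    funext fun x => Fin.addCases (fun i => by simp [τ]) (fun j => by simp [τ]) x
  rw [hτ]
  exact (isom_comp_equiv τ d).symm

section CharTwo

variable [CharP K 2]

theorem qf_add {n : ℕ} (d v w : Fin n → K) : qf K d (v + w) = qf K d v + qf K d w := by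
  simp only [qf, Pi.add_apply, CharTwo.add_sq, mul_add, Finset.sum_add_distrib]

theorem isom_update_zero_of_isotropic {m : ℕ} {d v : Fin m → K} (hv : qf K d v = 0) {i : Fin m}
    (hvi : v i ≠ 0) : Isom K (Function.update d i 0) d := by
  classical
  let T : (Fin m → K) →ₗ[K] (Fin m → K) :=
    LinearMap.id + (LinearMap.proj i).smulRight (v - Pi.single i 1)
  have hT : ∀ w, T w = w i • v + Function.update w i 0 := fun w => by
    funext j
    by_cases hj : j = i
    · subst hj; simp [T]; ring
    · simp [T, hj, add_comm]
  have hT_inj : Function.Injective T := by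
    refine (injective_iff_map_eq_zero T).mpr fun w hw => ?_
    have hwi : w i = 0 := by
      simpa [hT, hvi] using congrFun hw i
    rwa [hT, hwi, zero_smul, zero_add, Function.update_eq_self_iff.mpr hwi.symm] at hw
  refine ⟨LinearEquiv.ofInjectiveEndo T hT_inj, fun w => ?_⟩
  rw [LinearEquiv.coe_ofInjectiveEndo, hT, qf_add, qf_smul, hv, mul_zero, zero_add,
    qf_update_zero]

theorem isom_zero_append_succAbove_of_isotropic {m : ℕ} {d v : Fin (m + 1) → K}
    (hv : qf K d v = 0) {i : Fin (m + 1)} (hvi : v i ≠ 0) :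
    Isom K d (Fin.append (fun _ : Fin 1 => (0 : K)) (d ∘ i.succAbove)) := by
  have hcons : Fin.cons 0 (d ∘ i.succAbove) = Function.update d i 0 ∘ i.cycleRange.symm := by
    funext j
    cases j using Fin.cases with
    | zero => simp [Fin.cycleRange_symm_zero]
    | succ j => simp [Fin.cycleRange_symm_succ]
  rw [Fin.append_left_eq_cons, hcons]
  exact (isom_update_zero_of_isotropic hv hvi).symm.trans
    (isom_comp_equiv ((finCongr (Nat.add_comm 1 m)).trans i.cycleRange.symm) _).symm

theorem qf_mulVec {a b : ℕ} (e : Fin b → K) (M : Matrix (Fin b) (Fin a) K)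
    (v : Fin a → K) : qf K e (M.mulVec v) = qf K (fun j => qf K e fun i => M i j) v := by
  simp only [qf, Matrix.mulVec, dotProduct, CharTwo.sum_sq, Finset.mul_sum, Finset.sum_mul]
  rw [Finset.sum_comm]
  exact Finset.sum_congr rfl fun j _ => Finset.sum_congr rfl fun i _ => by ring

end CharTwo

theorem IsAnisPart.of_anis {m : ℕ} {d : Fin m → K} (hd : Anis K d) : IsAnisPart K d d := by
  refine ⟨hd, 0, ?_⟩
  rw [Fin.append_left_nil _ d rfl]
  exact (isom_comp_equiv (finCongr (Nat.zero_add m)) d).symm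

theorem IsAnisPart.of_isom_zero_append {a m n k : ℕ} {r : Fin a → K} {d : Fin m → K}
    {q : Fin n → K} (hr : IsAnisPart K r d)
    (hq : Isom K q (Fin.append (fun _ : Fin k => (0 : K)) d)) : IsAnisPart K r q := by
  obtain ⟨hr, u, hd⟩ := hr
  exact ⟨hr, k + u,
    hq.trans (((Isom.refl _).append hd).trans (isom_zero_append_zero_append r))⟩

theorem exists_isAnisPart_comp [CharP K 2] {m : ℕ} (d : Fin m → K) :
    ∃ (t : ℕ) (ι : Fin t → Fin m), Function.Injective ι ∧ IsAnisPart K (d ∘ ι) d := by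
  induction m with
  | zero => exact ⟨0, id, Function.injective_id, .of_anis fun v _ => Subsingleton.elim v 0⟩
  | succ m ih =>
    by_cases hd : Anis K d
    · exact ⟨m + 1, id, Function.injective_id, .of_anis hd⟩
    obtain ⟨v, hv, hv0⟩ : ∃ v, qf K d v = 0 ∧ v ≠ 0 := by simpa [Anis] using hd
    obtain ⟨i, hvi⟩ := Function.ne_iff.mp hv0
    obtain ⟨t, ι, hι, hr⟩ := ih (d ∘ i.succAbove)
    exact ⟨t, i.succAbove ∘ ι, Fin.succAbove_right_injective.comp hι,
      hr.of_isom_zero_append (isom_zero_append_succAbove_of_isotropic hv hvi)⟩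

section BaseChange

variable {F : Type} [Field F] (L : Type) [Field L] [Algebra F L]

theorem bc_append {a b : ℕ} (d : Fin a → F) (e : Fin b → F) :
    bc F L (Fin.append d e) = Fin.append (bc F L d) (bc F L e) :=
  funext fun x => Fin.addCases (fun _ => by simp [bc]) (fun _ => by simp [bc]) x

theorem bc_zero {k : ℕ} : bc F L (fun _ : Fin k => (0 : F)) = fun _ => 0 :=
  funext fun _ => map_zero _

theorem qf_bc {n : ℕ} (d w : Fin n → F) :
    qf L (bc F L d) (algebraMap F L ∘ w) = algebraMap F L (qf F d w) := by
  simp [qf, bc]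

/-- By `qf_mulVec`, a matrix is an isometry exactly when the target form takes the right values
on its columns; this survives base change, so the matrix of an isometry over `F` is one over `L`. -/
theorem Isom.bc [CharP L 2] {a b : ℕ} {d : Fin a → F} {e : Fin b → F} (h : Isom F d e) :
    Isom L (bc F L d) (bc F L e) := by
  obtain ⟨φ, hφ⟩ := h
  let M := LinearMap.toMatrix' φ.toLinearMap
  let N := LinearMap.toMatrix' φ.symm.toLinearMap
  have hMN : M * N = 1 := by
    rw [← LinearMap.toMatrix'_comp, LinearEquiv.comp_symm, LinearMap.toMatrix'_id]
  have hNM : N * M = 1 := by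
    rw [← LinearMap.toMatrix'_comp, LinearEquiv.symm_comp, LinearMap.toMatrix'_id]
  have hcol : ∀ j, qf F e (fun i => M i j) = d j := fun j => by
    simpa [M, LinearMap.toMatrix'_apply, qf, Pi.single_apply] using hφ (Pi.single j 1)
  let f := algebraMap F L
  have hmap : ∀ {p r : ℕ} {A : Matrix (Fin p) (Fin r) F} {B : Matrix (Fin r) (Fin p) F},
      A * B = 1 → A.map f * B.map f = 1 :=
    fun hAB => by rw [← Matrix.map_mul, hAB, Matrix.map_one f (map_zero f) (map_one f)]
  refine ⟨LinearEquiv.ofLinearMap (Matrix.toLin' (M.map f)) (Matrix.toLin' (N.map f))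
    (by rw [← Matrix.toLin'_mul, hmap hMN, Matrix.toLin'_one])
    (by rw [← Matrix.toLin'_mul, hmap hNM, Matrix.toLin'_one]), fun v => ?_⟩
  rw [LinearEquiv.coe_ofLinearMap, Matrix.toLin'_apply, qf_mulVec]
  congr 1
  funext j
  exact (qf_bc L e fun i => M i j).trans (congrArg f (hcol j))

end BaseChange

end QLin

open QLin in
/-- Let `q` be a quasilinear quadratic form over a field `F` of
characteristic `2` and `L` a field extension of `F`. Then there exists a subform `r` of
the anisotropic part `q_an` such that `r_L ≅ (q_L)_an`. -/
theorem statement5 (F : Type) [Field F] (h2 : (2 : F) = 0) {n : ℕ} (q : Fin n → F)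
    (L : Type) [Field L] [Algebra F L]
    (m : ℕ) (qan : Fin m → F) (hqan : IsAnisPart F qan q) :
    ∃ (k : ℕ) (r : Fin k → F), Subform F r qan ∧
      IsAnisPart L (bc F L r) (bc F L q) := by
  have : CharP F 2 := CharTwo.of_one_ne_zero_of_two_eq_zero one_ne_zero h2
  have : CharP L 2 := charP_of_injective_algebraMap (algebraMap F L).injective 2
  obtain ⟨-, k, hq⟩ := hqan
  obtain ⟨t, ι, hι, hr⟩ := exists_isAnisPart_comp (bc F L qan)
  refine ⟨t, qan ∘ ι, subform_comp_of_injective qan hι, hr.of_isom_zero_append (k := k) ?_⟩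
  simpa only [bc_append, bc_zero] using hq.bc L
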